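/- arXiv:math/9903160 — 3 statements merged into one kernel-verified Lean document; each statement's English description precedes it below -/
import Mathlib

section
/- In the two-day surprise exam, knowledge of the announcement on the eve of the second day rules out a second-day exam: let Q1, Q2 : Prop and Kb : Prop → Prop satisfy factivity (∀ p, Kb p → p) and distribution (∀ p q, Kb (p ∧ q) → Kb p ∧ Kb q; ∀ p q, Kb (p → q) → Kb p → Kb q), and additionally Kb (Q1 ∨ Q2) → Kb (¬Q1) → Kb Q2. Let A denote the announcement (Q1 → ¬ Ka Q1) ∧ (Q2 → ¬ Kb Q2 ∧ Kb (¬Q1)) ∧ (Q1 ∨ Q2) for some operator Ka. Then Kb A → ¬ Q2. -/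
/-! If the exam were on the second day, the announcement, being known and hence true, would say
that on the eve of that day the students know `¬Q1` but not `Q2`. Yet knowing the announcement
they know `Q1 ∨ Q2`, and together with `¬Q1` this gives knowledge of `Q2`. -/

theorem surprise_exam_no_second_day_general (Q1 Q2 : Prop) (Ka Kb : Prop → Prop)
    (hfact : ∀ p : Prop, Kb p → p)
    (hdistAnd : ∀ p q : Prop, Kb (p ∧ q) → Kb p ∧ Kb q)
    (hor : Kb (Q1 ∨ Q2) → Kb (¬Q1) → Kb Q2) :
    Kb ((Q1 → ¬ Ka Q1) ∧ (Q2 → ¬ Kb Q2 ∧ Kb (¬Q1)) ∧ (Q1 ∨ Q2)) → ¬ Q2 := by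
  intro hKA hQ2
  have hKor : Kb (Q1 ∨ Q2) := (hdistAnd _ _ (hdistAnd _ _ hKA).2).2
  obtain ⟨hnKQ2, hKnQ1⟩ := (hfact _ hKA).2.1 hQ2
  exact hnKQ2 (hor hKor hKnQ1)

theorem surprise_exam_no_second_day (Q1 Q2 : Prop) (Ka Kb : Prop → Prop)
    (hfact : ∀ p : Prop, Kb p → p)
    (hdistAnd : ∀ p q : Prop, Kb (p ∧ q) → Kb p ∧ Kb q)
    (hdistImp : ∀ p q : Prop, Kb (p → q) → Kb p → Kb q)
    (hor : Kb (Q1 ∨ Q2) → Kb (¬Q1) → Kb Q2) :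
    Kb ((Q1 → ¬ Ka Q1) ∧ (Q2 → ¬ Kb Q2 ∧ Kb (¬Q1)) ∧ (Q1 ∨ Q2)) → ¬ Q2 :=
  surprise_exam_no_second_day_general Q1 Q2 Ka Kb hfact hdistAnd hor
end

section
/- Propositional shadow of Fitch's Gödelized surprise exam: work in a Hilbert-style system for classical propositional logic extended with a unary modal operator P, whose derivability relation ⊢ is closed under necessitation (if ⊢ φ then ⊢ P φ). Let Q1, Q2, S be formulas such that ⊢ S ↔ ((Q1 ∧ ¬ P (S → Q1)) XOR (Q2 ∧ ¬ P ((S ∧ ¬ Q1) → Q2))), where XOR denotes exclusive disjunction. Then ⊢ ¬ S. -/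
/-- A Hilbert-style system for classical propositional logic extended with a
unary modal operator `P` ("provable"), whose derivability predicate `Prv` is
closed under modus ponens and necessitation. -/
structure ModalHilbertSystem where
  Form : Type
  imp : Form → Form → Form
  and : Form → Form → Form
  or : Form → Form → Form
  not : Form → Form
  P : Form → Form
  Prv : Form → Prop
  mp : ∀ φ ψ, Prv (imp φ ψ) → Prv φ → Prv ψ
  nec : ∀ φ, Prv φ → Prv (P φ)
  ax_k : ∀ φ ψ, Prv (imp φ (imp ψ φ))
  ax_s : ∀ φ ψ χ, Prv (imp (imp φ (imp ψ χ)) (imp (imp φ ψ) (imp φ χ)))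
  ax_dne : ∀ φ, Prv (imp (not (not φ)) φ)
  ax_not_elim : ∀ φ ψ, Prv (imp φ (imp (not φ) ψ))
  ax_not_intro : ∀ φ, Prv (imp (imp φ (not φ)) (not φ))
  ax_and_intro : ∀ φ ψ, Prv (imp φ (imp ψ (and φ ψ)))
  ax_and_left : ∀ φ ψ, Prv (imp (and φ ψ) φ)
  ax_and_right : ∀ φ ψ, Prv (imp (and φ ψ) ψ)
  ax_or_inl : ∀ φ ψ, Prv (imp φ (or φ ψ))
  ax_or_inr : ∀ φ ψ, Prv (imp ψ (or φ ψ))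
  ax_or_elim : ∀ φ ψ χ, Prv (imp (imp φ χ) (imp (imp ψ χ) (imp (or φ ψ) χ)))

/-- Biconditional, defined from the primitive connectives. -/
def ModalHilbertSystem.iff (M : ModalHilbertSystem) (φ ψ : M.Form) : M.Form :=
  M.and (M.imp φ ψ) (M.imp ψ φ)

/-- Exclusive disjunction, defined from the primitive connectives. -/
def ModalHilbertSystem.xor (M : ModalHilbertSystem) (φ ψ : M.Form) : M.Form :=
  M.or (M.and φ (M.not ψ)) (M.and (M.not φ) ψ)

/-!
Backward induction over the two days. Under `S`, one of the two day-clauses holds; if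
moreover the exam is not on day 1, the first clause fails, so `⊢ (S ∧ ¬Q1) → Q2`.
Necessitation makes this provable, contradicting the second clause, which is therefore
refutable. Then `S` forces the first clause, so `⊢ S → Q1`, and necessitation refutes the
first clause too; hence `⊢ ¬S`.
-/

namespace ModalHilbertSystem

variable {M : ModalHilbertSystem}

/-- Derivability from a list of hypotheses. Necessitation is not a rule here: it is sound only
for hypothesis-free derivations, and the deduction theorem would fail with it. -/
inductive Derives (M : ModalHilbertSystem) : List M.Form → M.Form → Prop
  | hyp {Γ φ} : φ ∈ Γ → M.Derives Γ φ
  | prv {Γ φ} : M.Prv φ → M.Derives Γ φ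
  | mp {Γ φ ψ} : M.Derives Γ (M.imp φ ψ) → M.Derives Γ φ → M.Derives Γ ψ

namespace Derives

variable {Γ : List M.Form} {φ ψ χ : M.Form}

theorem head : M.Derives (φ :: Γ) φ :=
  hyp List.mem_cons_self

theorem of_mem_tail (h : φ ∈ Γ) : M.Derives (ψ :: Γ) φ :=
  hyp (List.mem_cons_of_mem _ h)

theorem imp_self : M.Derives Γ (M.imp φ φ) :=
  mp (mp (prv (M.ax_s φ (M.imp φ φ) φ)) (prv (M.ax_k φ (M.imp φ φ)))) (prv (M.ax_k φ φ))

theorem weaken_imp (h : M.Derives Γ ψ) : M.Derives Γ (M.imp φ ψ) :=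
  mp (prv (M.ax_k ψ φ)) h

theorem deduction (h : M.Derives (φ :: Γ) ψ) : M.Derives Γ (M.imp φ ψ) := by
  generalize hΔ : φ :: Γ = Δ at h
  induction h with
  | hyp hmem =>
    subst hΔ
    rcases List.mem_cons.mp hmem with rfl | hmem
    · exact imp_self
    · exact weaken_imp (hyp hmem)
  | prv h => exact weaken_imp (prv h)
  | mp _ _ ih₁ ih₂ => exact mp (mp (prv (M.ax_s _ _ _)) ih₁) ih₂

theorem prv_of_nil (h : M.Derives [] φ) : M.Prv φ := by
  generalize hΔ : ([] : List M.Form) = Δ at h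
  induction h with
  | hyp hmem => subst hΔ; cases hmem
  | prv h => exact h
  | mp _ _ ih₁ ih₂ => exact M.mp _ _ ih₁ ih₂

theorem and_left (h : M.Derives Γ (M.and φ ψ)) : M.Derives Γ φ :=
  mp (prv (M.ax_and_left φ ψ)) h

theorem and_right (h : M.Derives Γ (M.and φ ψ)) : M.Derives Γ ψ :=
  mp (prv (M.ax_and_right φ ψ)) h

theorem absurd (h : M.Derives Γ φ) (hn : M.Derives Γ (M.not φ)) : M.Derives Γ ψ :=
  mp (mp (prv (M.ax_not_elim φ ψ)) h) hn

theorem not_intro (h : M.Derives (φ :: Γ) (M.not φ)) : M.Derives Γ (M.not φ) :=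
  mp (prv (M.ax_not_intro φ)) (deduction h)

theorem or_elim (h : M.Derives Γ (M.or φ ψ)) (h₁ : M.Derives (φ :: Γ) χ)
    (h₂ : M.Derives (ψ :: Γ) χ) : M.Derives Γ χ :=
  mp (mp (mp (prv (M.ax_or_elim φ ψ χ)) (deduction h₁)) (deduction h₂)) h

theorem or_of_xor (h : M.Derives Γ (M.xor φ ψ)) : M.Derives Γ (M.or φ ψ) :=
  or_elim h (mp (prv (M.ax_or_inl φ ψ)) (and_left head))
    (mp (prv (M.ax_or_inr φ ψ)) (and_right head))

end Derives

open Derives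

variable {φ ψ S Q Q₁ Q₂ X Y A B : M.Form}

theorem prv_imp_or_of_prv_iff_xor (h : M.Prv (M.iff S (M.xor A B))) :
    M.Prv (M.imp S (M.or A B)) :=
  prv_of_nil <| deduction <| or_of_xor <| Derives.mp (prv (M.mp _ _ (M.ax_and_left _ _) h)) head

theorem prv_not_of_prv_imp_or (h : M.Prv (M.imp S (M.or A B))) (hA : M.Prv (M.not A))
    (hB : M.Prv (M.not B)) : M.Prv (M.not S) :=
  prv_of_nil <| not_intro <| or_elim (Derives.mp (prv h) head)
    (absurd head (prv hA)) (absurd head (prv hB))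

theorem prv_imp_of_prv_imp_or_not (h : M.Prv (M.imp S (M.or (M.and Q X) B)))
    (hB : M.Prv (M.not B)) : M.Prv (M.imp S Q) :=
  prv_of_nil <| deduction <|
    or_elim (Derives.mp (prv h) head) (and_left head) (absurd head (prv hB))

theorem prv_and_not_imp_of_prv_imp_or
    (h : M.Prv (M.imp S (M.or (M.and Q₁ X) (M.and Q₂ Y)))) :
    M.Prv (M.imp (M.and S (M.not Q₁)) Q₂) :=
  prv_of_nil <| deduction <| or_elim (Derives.mp (prv h) (and_left head))
    (absurd (and_left head) (and_right (of_mem_tail List.mem_cons_self))) (and_left head)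

theorem prv_not_and_not_P (h : M.Prv φ) : M.Prv (M.not (M.and ψ (M.not (M.P φ)))) :=
  prv_of_nil <| not_intro <| absurd (prv (M.nec φ h)) (and_right head)

end ModalHilbertSystem

open ModalHilbertSystem in
theorem fitch_surprise_exam (M : ModalHilbertSystem) (Q1 Q2 S : M.Form)
    (hS : M.Prv (M.iff S
      (M.xor (M.and Q1 (M.not (M.P (M.imp S Q1))))
             (M.and Q2 (M.not (M.P (M.imp (M.and S (M.not Q1)) Q2))))))) :
    M.Prv (M.not S) := by
  have hcases := prv_imp_or_of_prv_iff_xor hS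
  have hnot_day₂ := prv_not_and_not_P (ψ := Q2) (prv_and_not_imp_of_prv_imp_or hcases)
  have hnot_day₁ := prv_not_and_not_P (ψ := Q1) (prv_imp_of_prv_imp_or_not hcases hnot_day₂)
  exact prv_not_of_prv_imp_or hcases hnot_day₁ hnot_day₂
end

section
/- First step of Fitch's argument: with hypotheses as in the previous statement (classical propositional logic with operator P closed under necessitation, and ⊢ S ↔ ((Q1 ∧ ¬ P (S → Q1)) XOR (Q2 ∧ ¬ P ((S ∧ ¬ Q1) → Q2)))), one has ⊢ (S ∧ ¬ Q1) → Q2 and consequently ⊢ S → Q1. -/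
namespace ModalHilbertSystem

variable {M : ModalHilbertSystem}

/-- `M.Der Γ φ`: `φ` is derivable from the hypotheses `Γ`, most recent first; it is encoded as the
theorem `γₙ → ⋯ → γ₁ → φ`, so that `M.Der (γ :: Γ) φ` and `M.Der Γ (M.imp γ φ)` agree by `rfl`. -/
def Der (M : ModalHilbertSystem) (Γ : List M.Form) (φ : M.Form) : Prop :=
  M.Prv (Γ.foldl (fun acc γ => M.imp γ acc) φ)

theorem prv_imp_self (φ : M.Form) : M.Prv (M.imp φ φ) :=
  M.mp _ _ (M.mp _ _ (M.ax_s φ (M.imp φ φ) φ) (M.ax_k φ (M.imp φ φ))) (M.ax_k φ φ)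

namespace Der

theorem of_prv {φ : M.Form} (h : M.Prv φ) : ∀ Γ : List M.Form, M.Der Γ φ
  | [] => h
  | γ :: Γ => of_prv (M.mp _ _ (M.ax_k φ γ) h) Γ

theorem mp : ∀ {Γ : List M.Form} {φ ψ : M.Form},
    M.Der Γ (M.imp φ ψ) → M.Der Γ φ → M.Der Γ ψ
  | [], _, _, h₁, h₂ => M.mp _ _ h₁ h₂
  | γ :: Γ, φ, ψ, h₁, h₂ =>
    show M.Der Γ (M.imp γ ψ) from mp (mp (of_prv (M.ax_s γ φ ψ) Γ) h₁) h₂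

theorem hyp (Γ : List M.Form) (φ : M.Form) : M.Der (φ :: Γ) φ :=
  of_prv (prv_imp_self φ) Γ

theorem weaken {Γ : List M.Form} {φ : M.Form} (ψ : M.Form) (h : M.Der Γ φ) :
    M.Der (ψ :: Γ) φ :=
  show M.Der Γ (M.imp ψ φ) from mp (of_prv (M.ax_k φ ψ) Γ) h

theorem absurd {Γ : List M.Form} {φ : M.Form} (ψ : M.Form)
    (h₁ : M.Der Γ φ) (h₂ : M.Der Γ (M.not φ)) : M.Der Γ ψ :=
  mp (mp (of_prv (M.ax_not_elim φ ψ) Γ) h₁) h₂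

theorem and_left {Γ : List M.Form} {φ ψ : M.Form} (h : M.Der Γ (M.and φ ψ)) : M.Der Γ φ :=
  mp (of_prv (M.ax_and_left φ ψ) Γ) h

theorem and_right {Γ : List M.Form} {φ ψ : M.Form} (h : M.Der Γ (M.and φ ψ)) : M.Der Γ ψ :=
  mp (of_prv (M.ax_and_right φ ψ) Γ) h

theorem or_elim {Γ : List M.Form} {φ ψ χ : M.Form} (h : M.Der Γ (M.or φ ψ))
    (h₁ : M.Der (φ :: Γ) χ) (h₂ : M.Der (ψ :: Γ) χ) : M.Der Γ χ :=
  mp (mp (mp (of_prv (M.ax_or_elim φ ψ χ) Γ) h₁) h₂) h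

end Der

theorem prv_and_not_imp_of_prv_imp_xor {S Q₁ Q₂ X Y : M.Form}
    (hS : M.Prv (M.imp S (M.xor (M.and Q₁ X) (M.and Q₂ Y)))) :
    M.Prv (M.imp (M.and S (M.not Q₁)) Q₂) := by
  let Γ := [M.and S (M.not Q₁)]
  have hxor : M.Der Γ (M.xor (M.and Q₁ X) (M.and Q₂ Y)) :=
    Der.mp (Der.of_prv hS Γ) (Der.hyp [] _).and_left
  have hnQ₁ : M.Der Γ (M.not Q₁) := (Der.hyp [] _).and_right
  refine Der.or_elim hxor ?_ ?_
  · exact Der.absurd Q₂ (Der.hyp Γ _).and_left.and_left (hnQ₁.weaken _)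
  · exact (Der.hyp Γ _).and_right.and_left

theorem prv_imp_of_prv_imp_xor_of_prv {S Q₁ Q₂ X Z : M.Form}
    (hS : M.Prv (M.imp S (M.xor (M.and Q₁ X) (M.and Q₂ (M.not Z))))) (hZ : M.Prv Z) :
    M.Prv (M.imp S Q₁) := by
  let Γ := [S]
  refine Der.or_elim (Der.mp (Der.of_prv hS Γ) (Der.hyp [] S)) ?_ ?_
  · exact (Der.hyp Γ _).and_left.and_left
  · exact Der.absurd Q₁ (Der.of_prv hZ _) (Der.hyp Γ _).and_right.and_right

end ModalHilbertSystem

open ModalHilbertSystem in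
theorem fitch_first_step (M : ModalHilbertSystem) (Q1 Q2 S : M.Form)
    (hS : M.Prv (M.iff S
      (M.xor (M.and Q1 (M.not (M.P (M.imp S Q1))))
             (M.and Q2 (M.not (M.P (M.imp (M.and S (M.not Q1)) Q2))))))) :
    M.Prv (M.imp (M.and S (M.not Q1)) Q2) ∧ M.Prv (M.imp S Q1) := by
  have hS_imp := M.mp _ _ (M.ax_and_left _ _) hS
  have h_day_two := prv_and_not_imp_of_prv_imp_xor hS_imp
  exact ⟨h_day_two, prv_imp_of_prv_imp_xor_of_prv hS_imp (M.nec _ h_day_two)⟩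
end
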